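/- Fix u, k, ω, σ > 0, and for λ > 0 define M(β; λ) := ½u²k [ sin(ωβ) exp(−½k²σ²(β + λ^{−1}(1 − e^{−λβ}))) − λ ∫₀^∞ exp(−λα − ½k²σ²(α + β + λ^{−1})) sin(ω(α+β)) sinh((k²σ²/(2λ)) e^{−λ(α+β)}) dα ]. Then ∫₀^∞ M(β; λ) dβ → 2u²kω / (k⁴σ⁴ + 4ω²) as λ → ∞. -/

import Mathlib

/-!
The kernel converges pointwise to `sin (ω β) e^{-a β}` (times `½u²k`), where `a = k²σ²/2`: the
shift `λ⁻¹ (1 - e^{-λβ})` in the first exponent lies in `[0, λ⁻¹]`, and since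
`sinh y · e^{-y} ≤ y`, the inner integrand is at most `(a/λ) e^{-aβ} e^{-λα}`, so the correction
`λ ∫ … dα` is `O(λ⁻¹ e^{-aβ})`. For `λ ≥ a` the same estimates dominate the kernel by
`2 e^{-aβ}`, and dominated convergence leaves `∫₀^∞ sin (ω β) e^{-aβ} dβ = ω / (a² + ω²)`, the
imaginary part of `∫₀^∞ e^{(iω - a) β} dβ`.
-/

open MeasureTheory Real Set

/-- The paper's leading-order Stokes'-drift kernel `M(β)` for the elastic dumbbell,
with wave amplitude `u`, wavenumber `k`, frequency `ω`, noise strength `σ`,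
and spring constant `l` (the paper's `λ`). -/
noncomputable def stokesKernel (u k ω σ l β : ℝ) : ℝ :=
  (1 / 2) * u ^ 2 * k *
    (Real.sin (ω * β) *
        Real.exp (-(k ^ 2 * σ ^ 2 / 2) * (β + l⁻¹ * (1 - Real.exp (-(l * β))))) -
      l * ∫ α in Ioi (0 : ℝ),
        Real.exp (-(l * α) - k ^ 2 * σ ^ 2 / 2 * (α + β + l⁻¹)) * Real.sin (ω * (α + β)) *
          Real.sinh (k ^ 2 * σ ^ 2 / (2 * l) * Real.exp (-(l * (α + β)))))

open Filter Topology

theorem Real.sinh_mul_exp_neg_le (x : ℝ) : sinh x * exp (-x) ≤ x := by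
  have h : sinh x * exp (-x) = (1 - exp (-(2 * x))) / 2 := by
    rw [sinh_eq, div_mul_eq_mul_div, sub_mul, ← exp_add, ← exp_add]
    ring_nf
    simp
  linarith [h, add_one_le_exp (-(2 * x))]

theorem integral_sin_mul_exp_neg_mul_Ioi {a : ℝ} (ha : 0 < a) (ω : ℝ) :
    ∫ β in Ioi (0 : ℝ), sin (ω * β) * exp (-(a * β)) = ω / (a ^ 2 + ω ^ 2) := by
  set c : ℂ := ⟨-a, ω⟩
  have hc : c.re < 0 := by simpa [c] using ha
  have hsin_eq_im : ∀ β : ℝ, sin (ω * β) * exp (-(a * β)) = (Complex.exp (c * β)).im := by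
    intro β
    simp [Complex.exp_im, c, mul_comm]
  simp_rw [hsin_eq_im]
  have him := integral_im (𝕜 := ℂ) (integrableOn_exp_mul_complex_Ioi hc 0)
  simp only [RCLike.im_to_complex] at him
  rw [him, integral_exp_mul_complex_Ioi hc 0]
  simp only [Complex.ofReal_zero, mul_zero, Complex.exp_zero, Complex.div_im, Complex.neg_im,
    Complex.one_im, neg_zero, mul_neg, zero_mul, Complex.normSq, MonoidWithZeroHom.coe_mk,
    ZeroHom.coe_mk, neg_mul, neg_neg, zero_div, Complex.neg_re, Complex.one_re, one_mul, zero_sub,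
    c]
  field_simp

noncomputable def springIntegral (a ω l β : ℝ) : ℝ :=
  ∫ α in Ioi (0 : ℝ), exp (-(l * α) - a * (α + β + l⁻¹)) * sin (ω * (α + β)) *
    sinh (a / l * exp (-(l * (α + β))))

noncomputable def driftKernel (a ω l β : ℝ) : ℝ :=
  sin (ω * β) * exp (-a * (β + l⁻¹ * (1 - exp (-(l * β))))) - l * springIntegral a ω l β

theorem stokesKernel_eq_mul_driftKernel (u k ω σ l β : ℝ) :
    stokesKernel u k ω σ l β = 1 / 2 * u ^ 2 * k * driftKernel (k ^ 2 * σ ^ 2 / 2) ω l β := by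
  simp only [stokesKernel, driftKernel, springIntegral, div_div]

section

variable {a l α β : ℝ} (ω : ℝ)

theorem abs_springIntegral_integrand_le (ha : 0 ≤ a) (hl : 0 < l) (hα : 0 ≤ α) (hβ : 0 ≤ β) :
    |exp (-(l * α) - a * (α + β + l⁻¹)) * sin (ω * (α + β)) *
        sinh (a / l * exp (-(l * (α + β))))| ≤
      a / l * exp (-(a * β)) * exp (-(l * α)) := by
  have hy : 0 ≤ a / l * exp (-(l * (α + β))) := by positivity
  have hy' : a / l * exp (-(l * (α + β))) ≤ a / l :=
    mul_le_of_le_one_right (by positivity) (exp_le_one_iff.mpr (by nlinarith))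
  rw [abs_mul, abs_mul, abs_exp, abs_of_nonneg (sinh_nonneg_iff.mpr hy)]
  calc exp (-(l * α) - a * (α + β + l⁻¹)) * |sin (ω * (α + β))| *
        sinh (a / l * exp (-(l * (α + β))))
      ≤ exp (-(l * α) - a * β - a / l) * 1 * sinh (a / l) := by
        gcongr ?_ * ?_ * ?_
        · exact exp_le_exp.mpr (by rw [div_eq_mul_inv]; nlinarith)
        · exact abs_sin_le_one _
        · exact sinh_le_sinh.mpr hy'
    _ = exp (-(l * α)) * exp (-(a * β)) * (sinh (a / l) * exp (-(a / l))) := by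
        rw [sub_eq_add_neg, sub_eq_add_neg, exp_add, exp_add]; ring
    _ ≤ exp (-(l * α)) * exp (-(a * β)) * (a / l) := by
        gcongr; exact sinh_mul_exp_neg_le _
    _ = a / l * exp (-(a * β)) * exp (-(l * α)) := by ring

theorem abs_mul_springIntegral_le (ha : 0 ≤ a) (hl : 0 < l) (hβ : 0 ≤ β) :
    |l * springIntegral a ω l β| ≤ a / l * exp (-(a * β)) := by
  have hexp : IntegrableOn (fun α => exp (-(l * α))) (Ioi 0) := by
    simpa only [neg_mul] using integrableOn_exp_mul_Ioi (neg_lt_zero.mpr hl) 0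
  have hint : ∫ α in Ioi (0 : ℝ), exp (-(l * α)) = l⁻¹ := by
    simpa only [neg_mul, mul_zero, exp_zero, neg_div_neg_eq, one_div]
      using integral_exp_mul_Ioi (neg_lt_zero.mpr hl) 0
  have hbound := norm_integral_le_of_norm_le (hexp.const_mul (a / l * exp (-(a * β))))
    ((ae_restrict_mem measurableSet_Ioi).mono fun α hα =>
      (norm_eq_abs _).trans_le (abs_springIntegral_integrand_le ω ha hl (le_of_lt hα) hβ))
  rw [integral_const_mul, hint] at hbound
  rw [abs_mul, abs_of_pos hl]
  calc l * |springIntegral a ω l β| ≤ l * (a / l * exp (-(a * β)) * l⁻¹) := by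
        gcongr; exact hbound
    _ = a / l * exp (-(a * β)) := by field_simp

theorem inv_mul_one_sub_exp_neg_mem_Icc (hl : 0 < l) (hβ : 0 ≤ β) :
    l⁻¹ * (1 - exp (-(l * β))) ∈ Icc 0 l⁻¹ := by
  have h1 : 0 < exp (-(l * β)) := exp_pos _
  have h2 : exp (-(l * β)) ≤ 1 := exp_le_one_iff.mpr (by nlinarith)
  constructor <;> nlinarith [inv_pos.mpr hl]

theorem abs_driftKernel_le (ha : 0 ≤ a) (hal : a ≤ l) (hl : 0 < l) (hβ : 0 ≤ β) :
    |driftKernel a ω l β| ≤ 2 * exp (-(a * β)) := by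
  have hshift := (inv_mul_one_sub_exp_neg_mem_Icc hl hβ).1
  have hfirst : |sin (ω * β) * exp (-a * (β + l⁻¹ * (1 - exp (-(l * β)))))| ≤
      exp (-(a * β)) := by
    rw [abs_mul, abs_exp]
    exact (mul_le_of_le_one_left (exp_pos _).le (abs_sin_le_one _)).trans
      (exp_le_exp.mpr (by nlinarith))
  have hsecond : |l * springIntegral a ω l β| ≤ exp (-(a * β)) :=
    (abs_mul_springIntegral_le ω ha hl hβ).trans
      (mul_le_of_le_one_left (exp_pos _).le ((div_le_one hl).mpr hal))
  calc |driftKernel a ω l β| ≤ _ := abs_sub _ _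
    _ ≤ 2 * exp (-(a * β)) := by linarith

theorem tendsto_driftKernel_atTop (ha : 0 ≤ a) (hβ : 0 ≤ β) :
    Tendsto (fun l => driftKernel a ω l β) atTop (𝓝 (sin (ω * β) * exp (-(a * β)))) := by
  have hshift : Tendsto (fun l => l⁻¹ * (1 - exp (-(l * β)))) atTop (𝓝 0) :=
    tendsto_of_tendsto_of_tendsto_of_le_of_le' tendsto_const_nhds tendsto_inv_atTop_zero
      ((eventually_gt_atTop 0).mono fun l hl => (inv_mul_one_sub_exp_neg_mem_Icc hl hβ).1)
      ((eventually_gt_atTop 0).mono fun l hl => (inv_mul_one_sub_exp_neg_mem_Icc hl hβ).2)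
  have hfirst : Tendsto (fun l => sin (ω * β) * exp (-a * (β + l⁻¹ * (1 - exp (-(l * β))))))
      atTop (𝓝 (sin (ω * β) * exp (-(a * β)))) := by
    have := ((continuous_exp.comp (continuous_const_mul (-a))).tendsto β).comp
      (by simpa using hshift.const_add β)
    simpa [Function.comp_def] using this.const_mul (sin (ω * β))
  have hsecond : Tendsto (fun l => l * springIntegral a ω l β) atTop (𝓝 0) :=
    squeeze_zero_norm' ((eventually_gt_atTop 0).mono fun l hl =>
      (norm_eq_abs _).trans_le (abs_mul_springIntegral_le ω ha hl hβ))
      (by simpa using (tendsto_const_nhds (x := a)).div_atTop tendsto_id |>.mul_const _)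
  simpa only [driftKernel, sub_zero] using hfirst.sub hsecond

theorem aestronglyMeasurable_driftKernel (a l : ℝ) (μ : Measure ℝ) :
    AEStronglyMeasurable (driftKernel a ω l) μ := by
  have hinner : StronglyMeasurable (springIntegral a ω l) := by
    refine Continuous.stronglyMeasurable ?_ |>.integral_prod_right'
      (f := fun p : ℝ × ℝ => exp (-(l * p.2) - a * (p.2 + p.1 + l⁻¹)) * sin (ω * (p.2 + p.1)) *
        sinh (a / l * exp (-(l * (p.2 + p.1)))))
    fun_prop
  have hfirst :
      Continuous fun β => sin (ω * β) * exp (-a * (β + l⁻¹ * (1 - exp (-(l * β))))) := by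
    fun_prop
  exact (hfirst.stronglyMeasurable.sub (stronglyMeasurable_const.mul hinner)).aestronglyMeasurable

end

theorem tendsto_integral_driftKernel_atTop {a : ℝ} (ha : 0 < a) (ω : ℝ) :
    Tendsto (fun l => ∫ β in Ioi (0 : ℝ), driftKernel a ω l β) atTop
      (𝓝 (ω / (a ^ 2 + ω ^ 2))) := by
  rw [← integral_sin_mul_exp_neg_mul_Ioi ha ω]
  refine tendsto_integral_filter_of_dominated_convergence (fun β => 2 * exp (-(a * β)))
    (.of_forall fun l => aestronglyMeasurable_driftKernel ω a l _) ?_ ?_ ?_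
  · filter_upwards [eventually_ge_atTop a] with l hal
    filter_upwards [ae_restrict_mem measurableSet_Ioi] with β hβ
    exact (norm_eq_abs _).trans_le (abs_driftKernel_le ω ha.le hal (ha.trans_le hal) hβ.le)
  · simpa only [neg_mul] using (integrableOn_exp_mul_Ioi (neg_lt_zero.mpr ha) 0).const_mul 2
  · filter_upwards [ae_restrict_mem measurableSet_Ioi] with β hβ
    exact tendsto_driftKernel_atTop ω ha.le hβ.le

theorem stokesDrift_tendsto_strong_spring (u k ω σ : ℝ)
    (hk : 0 < k) (hσ : 0 < σ) :
    Filter.Tendsto (fun l : ℝ => ∫ β in Ioi (0 : ℝ), stokesKernel u k ω σ l β)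
      Filter.atTop
      (nhds (2 * u ^ 2 * k * ω / (k ^ 4 * σ ^ 4 + 4 * ω ^ 2))) := by
  have ha : 0 < k ^ 2 * σ ^ 2 / 2 := by positivity
  have hden : k ^ 4 * σ ^ 4 + 4 * ω ^ 2 ≠ 0 := by positivity
  simp_rw [stokesKernel_eq_mul_driftKernel, integral_const_mul]
  convert (tendsto_integral_driftKernel_atTop ha ω).const_mul (1 / 2 * u ^ 2 * k) using 2
  field_simp
  ring
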